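/- Suppose A is unbounded and there exists a linear manifold H_∞ ⊆ H of finite codimension such that every sequence (x_n) in H_∞ ∩ dom A with ‖Ax_n‖ = 1 and x_n → 0 satisfies liminf_n [Ax_n,Ax_n] > 0 (i.e., ∞ is a spectral point of type π₊ of A). Then every sequence (x_n) in dom A with ‖Ax_n‖ = 1 and x_n → 0 satisfies liminf_n [Ax_n,Ax_n] > 0 (i.e., ∞ is a spectral point of positive type of A). Analogously, if ∞ is of type π₋ (with limsup_n [Ax_n,Ax_n] < 0 for sequences in H_∞ ∩ dom A), then ∞ is of negative type. -/

import Mathlib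

open Filter Topology OnePoint Set

noncomputable section

namespace Paper

variable {H : Type*} [NormedAddCommGroup H] [InnerProductSpace ℂ H]

/-- The indefinite inner ℂ product `[x,y] := (Gx, y)` induced by the Gram operator `G`. -/
def brk (G : H →L[ℂ] H) (x y : H) : ℂ := inner ℂ (G x) y

/-- The real part of `[x,y]`; note that `[x,x]` is real when `G` is selfadjoint. -/
def brkRe (G : H →L[ℂ] H) (x y : H) : ℝ := (brk G x y).re

/-- A linear manifold of finite codimension in `H`. -/
def FinCodim (M : Submodule ℂ H) : Prop := FiniteDimensional ℂ (H ⧸ M)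

/-- An approximate eigensequence of `A` at the finite point `l`. -/
def IsApproxSeq (A : H →ₗ.[ℂ] H) (l : ℂ) (x : ℕ → A.domain) : Prop :=
  (∀ n, ‖(x n : H)‖ = 1) ∧
    Tendsto (fun n => A (x n) - l • ((x n : H))) atTop (𝓝 0)

/-- The approximate point spectrum of `A`. -/
def sigmaAp (A : H →ₗ.[ℂ] H) : Set ℂ := {l | ∃ x : ℕ → A.domain, IsApproxSeq A l x}

/-- The type `π₊` condition at `l` relative to the linear manifold `M`. -/
def PiPlusCond (G : H →L[ℂ] H) (A : H →ₗ.[ℂ] H) (l : ℂ) (M : Submodule ℂ H) : Prop :=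
  ∀ x : ℕ → A.domain, (∀ n, (x n : H) ∈ M) → IsApproxSeq A l x →
    0 < atTop.liminf (fun n => brkRe G (x n) (x n))

/-- The type `π₋` condition at `l` relative to the linear manifold `M`. -/
def PiMinusCond (G : H →L[ℂ] H) (A : H →ₗ.[ℂ] H) (l : ℂ) (M : Submodule ℂ H) : Prop :=
  ∀ x : ℕ → A.domain, (∀ n, (x n : H) ∈ M) → IsApproxSeq A l x →
    atTop.limsup (fun n => brkRe G (x n) (x n)) < 0

/-- `l` is a spectral point of type `π₊` of `A`. -/
def sigmaPiPlusAt (G : H →L[ℂ] H) (A : H →ₗ.[ℂ] H) (l : ℂ) : Prop :=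
  l ∈ sigmaAp A ∧ ∃ M : Submodule ℂ H, FinCodim M ∧ PiPlusCond G A l M

/-- `l` is a spectral point of type `π₋` of `A`. -/
def sigmaPiMinusAt (G : H →L[ℂ] H) (A : H →ₗ.[ℂ] H) (l : ℂ) : Prop :=
  l ∈ sigmaAp A ∧ ∃ M : Submodule ℂ H, FinCodim M ∧ PiMinusCond G A l M

/-- `l` is a spectral point of positive type of `A`. -/
def sigmaPPAt (G : H →L[ℂ] H) (A : H →ₗ.[ℂ] H) (l : ℂ) : Prop :=
  l ∈ sigmaAp A ∧ PiPlusCond G A l ⊤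

/-- `l` is a spectral point of negative type of `A`. -/
def sigmaMMAt (G : H →L[ℂ] H) (A : H →ₗ.[ℂ] H) (l : ℂ) : Prop :=
  l ∈ sigmaAp A ∧ PiMinusCond G A l ⊤

/-- An approximate eigensequence of `A` at `∞`. -/
def IsInftyApproxSeq (A : H →ₗ.[ℂ] H) (x : ℕ → A.domain) : Prop :=
  (∀ n, ‖A (x n)‖ = 1) ∧ Tendsto (fun n => ((x n : H))) atTop (𝓝 0)

/-- `A` is a bounded operator. -/
def IsBoundedOp (A : H →ₗ.[ℂ] H) : Prop := ∃ C : ℝ, ∀ x : A.domain, ‖A x‖ ≤ C * ‖(x : H)‖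

/-- The type `π₊` condition at `∞` relative to the linear manifold `M`. -/
def InftyPiPlusCond (G : H →L[ℂ] H) (A : H →ₗ.[ℂ] H) (M : Submodule ℂ H) : Prop :=
  ∀ x : ℕ → A.domain, (∀ n, (x n : H) ∈ M) → IsInftyApproxSeq A x →
    0 < atTop.liminf (fun n => brkRe G (A (x n)) (A (x n)))

/-- The type `π₋` condition at `∞` relative to the linear manifold `M`. -/
def InftyPiMinusCond (G : H →L[ℂ] H) (A : H →ₗ.[ℂ] H) (M : Submodule ℂ H) : Prop :=
  ∀ x : ℕ → A.domain, (∀ n, (x n : H) ∈ M) → IsInftyApproxSeq A x →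
    atTop.limsup (fun n => brkRe G (A (x n)) (A (x n))) < 0

/-- `∞` is a spectral point of type `π₊` of `A`. -/
def sigmaPiPlusInfty (G : H →L[ℂ] H) (A : H →ₗ.[ℂ] H) : Prop :=
  ¬ IsBoundedOp A ∧ ∃ M : Submodule ℂ H, FinCodim M ∧ InftyPiPlusCond G A M

/-- `∞` is a spectral point of type `π₋` of `A`. -/
def sigmaPiMinusInfty (G : H →L[ℂ] H) (A : H →ₗ.[ℂ] H) : Prop :=
  ¬ IsBoundedOp A ∧ ∃ M : Submodule ℂ H, FinCodim M ∧ InftyPiMinusCond G A M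

/-- `∞` is a spectral point of positive type of `A`. -/
def sigmaPPInfty (G : H →L[ℂ] H) (A : H →ₗ.[ℂ] H) : Prop :=
  ¬ IsBoundedOp A ∧ InftyPiPlusCond G A ⊤

/-- `∞` is a spectral point of negative type of `A`. -/
def sigmaMMInfty (G : H →L[ℂ] H) (A : H →ₗ.[ℂ] H) : Prop :=
  ¬ IsBoundedOp A ∧ InftyPiMinusCond G A ⊤

/-- A subset of the Riemann sphere `ℂ̄ = ℂ ∪ {∞}` given by a condition at finite
points and a condition at `∞`. -/
def extSet (Pf : ℂ → Prop) (Pinf : Prop) : Set (OnePoint ℂ) :=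
  {p | (∃ l : ℂ, p = (l : OnePoint ℂ) ∧ Pf l) ∨ (p = ∞ ∧ Pinf)}

/-- The extended approximate point spectrum `σ̃_ap(A) ⊆ ℂ̄`. -/
def extSigmaAp (A : H →ₗ.[ℂ] H) : Set (OnePoint ℂ) :=
  extSet (fun l => l ∈ sigmaAp A) (¬ IsBoundedOp A)

/-- The set `σ_{π+}(A) ⊆ ℂ̄`. -/
def extPiPlus (G : H →L[ℂ] H) (A : H →ₗ.[ℂ] H) : Set (OnePoint ℂ) :=
  extSet (sigmaPiPlusAt G A) (sigmaPiPlusInfty G A)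

/-- The set `σ_{π−}(A) ⊆ ℂ̄`. -/
def extPiMinus (G : H →L[ℂ] H) (A : H →ₗ.[ℂ] H) : Set (OnePoint ℂ) :=
  extSet (sigmaPiMinusAt G A) (sigmaPiMinusInfty G A)

/-- The set `σ_{++}(A) ⊆ ℂ̄`. -/
def extPP (G : H →L[ℂ] H) (A : H →ₗ.[ℂ] H) : Set (OnePoint ℂ) :=
  extSet (sigmaPPAt G A) (sigmaPPInfty G A)

/-- The set `σ_{−−}(A) ⊆ ℂ̄`. -/
def extMM (G : H →L[ℂ] H) (A : H →ₗ.[ℂ] H) : Set (OnePoint ℂ) :=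
  extSet (sigmaMMAt G A) (sigmaMMInfty G A)

/-- The extended set of points of regular type, `r̃(A) = ℂ̄ \ σ̃_ap(A)`. -/
def extReg (A : H →ₗ.[ℂ] H) : Set (OnePoint ℂ) := (extSigmaAp A)ᶜ

/-- `A` is `G`-symmetric: `[Ax,y] = [x,Ay]` for `x, y ∈ dom A`. -/
def GSymm (G : H →L[ℂ] H) (A : H →ₗ.[ℂ] H) : Prop :=
  ∀ x y : A.domain, brk G (A x) (y : H) = brk G (x : H) (A y)

/-- A bounded operator `T` is `G`-symmetric (equivalently, `G`-selfadjoint):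
`[Tx,y] = [x,Ty]` for all `x, y`. -/
def GSymmB (G T : H →L[ℂ] H) : Prop := ∀ x y : H, brk G (T x) y = brk G x (T y)

/-- `l ∈ ρ(A)`: the operator `A − l` maps `dom A` bijectively onto `H`
with a bounded inverse. -/
def InResolventSet (A : H →ₗ.[ℂ] H) (l : ℂ) : Prop :=
  (∀ y : H, ∃ x : A.domain, A x - l • (x : H) = y) ∧
  ∃ c : ℝ, 0 < c ∧ ∀ x : A.domain, c * ‖(x : H)‖ ≤ ‖A x - l • (x : H)‖

/-- The spectrum `σ(A) = ℂ \ ρ(A)`. -/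
def spectrumSet (A : H →ₗ.[ℂ] H) : Set ℂ := {l | ¬ InResolventSet A l}

/-- `ker (A − l)` as a submodule of `H`. -/
def kerAt (A : H →ₗ.[ℂ] H) (l : ℂ) : Submodule ℂ H where
  carrier := {x | ∃ hx : x ∈ A.domain, A ⟨x, hx⟩ = l • x}
  zero_mem' := ⟨A.domain.zero_mem, by
    have : (⟨(0 : H), A.domain.zero_mem⟩ : A.domain) = 0 := rfl
    rw [this, A.map_zero, smul_zero]⟩
  add_mem' := by
    rintro a b ⟨ha, ea⟩ ⟨hb, eb⟩
    refine ⟨A.domain.add_mem ha hb, ?_⟩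
    have : (⟨a + b, A.domain.add_mem ha hb⟩ : A.domain) = ⟨a, ha⟩ + ⟨b, hb⟩ := rfl
    rw [this, A.map_add, ea, eb, smul_add]
  smul_mem' := by
    rintro c x ⟨hx, ex⟩
    refine ⟨A.domain.smul_mem c hx, ?_⟩
    have : (⟨c • x, A.domain.smul_mem c hx⟩ : A.domain) = c • (⟨x, hx⟩ : A.domain) := rfl
    rw [this, A.map_smul, ex, smul_comm]

/-- The range of `A − l`. -/
def ranAt (A : H →ₗ.[ℂ] H) (l : ℂ) : Set H :=
  {y | ∃ x : A.domain, A x - l • (x : H) = y}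

/-- A uniformly positive subspace. -/
def IsUnifPos (G : H →L[ℂ] H) (L : Submodule ℂ H) : Prop :=
  ∃ δ : ℝ, 0 < δ ∧ ∀ x ∈ L, δ * ‖x‖ ^ 2 ≤ brkRe G x x

/-- A uniformly negative subspace. -/
def IsUnifNeg (G : H →L[ℂ] H) (L : Submodule ℂ H) : Prop :=
  ∃ δ : ℝ, 0 < δ ∧ ∀ x ∈ L, δ * ‖x‖ ^ 2 ≤ -brkRe G x x

/-- A positive set: every nonzero element `x` has `[x,x] > 0`. -/
def IsPosSet (G : H →L[ℂ] H) (S : Set H) : Prop := ∀ x ∈ S, x ≠ 0 → 0 < brkRe G x x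

/-- A negative set: every nonzero element `x` has `[x,x] < 0`. -/
def IsNegSet (G : H →L[ℂ] H) (S : Set H) : Prop := ∀ x ∈ S, x ≠ 0 → brkRe G x x < 0

/-- The orthogonal companion `L^{[⊥]}` of `L` with respect to `[·,·]`. -/
def orthCompanion (G : H →L[ℂ] H) (L : Submodule ℂ H) : Submodule ℂ H where
  carrier := {x | ∀ y ∈ L, brk G x y = 0}
  zero_mem' := by intro y hy; simp [brk]
  add_mem' := by
    intro a b ha hb y hy
    simp only [brk, map_add, inner_add_left] at *
    rw [ha y hy, hb y hy, add_zero]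
  smul_mem' := by
    intro c x hx y hy
    simp only [brk, _root_.map_smul, inner_smul_left] at *
    rw [hx y hy, mul_zero]

/-- The isotropic part `L° = L ∩ L^{[⊥]}` of `L`. -/
def isoPart (G : H →L[ℂ] H) (L : Submodule ℂ H) : Submodule ℂ H := L ⊓ orthCompanion G L

/-- A fundamental decomposition `L = L₊ [∔] L₋ [∔] L°` of `L`. -/
def IsFundDecomp (G : H →L[ℂ] H) (L Lp Lm L0 : Submodule ℂ H) : Prop :=
  Lp ≤ L ∧ Lm ≤ L ∧ L0 = isoPart G L ∧
  IsPosSet G (Lp : Set H) ∧ IsNegSet G (Lm : Set H) ∧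
  (∀ x ∈ Lp, ∀ y ∈ Lm, brk G x y = 0) ∧
  (∀ x ∈ L, ∃ p ∈ Lp, ∃ m ∈ Lm, ∃ z ∈ L0, x = p + m + z) ∧
  (∀ p ∈ Lp, ∀ m ∈ Lm, ∀ z ∈ L0, p + m + z = 0 → p = 0 ∧ m = 0 ∧ z = 0)

/-- A Jordan chain `x 0, …, x (n-1)` of `A` at `l` of length `n`. -/
def IsJordanChain (A : H →ₗ.[ℂ] H) (l : ℂ) (n : ℕ) (x : ℕ → A.domain) : Prop :=
  0 < n ∧ (∀ i < n, (x i : H) ≠ 0) ∧ A (x 0) = l • ((x 0 : H)) ∧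
  ∀ i, i + 1 < n → A (x (i + 1)) = l • ((x (i + 1) : H)) + (x i : H)

/-- A Jordan chain of `A` at `l` of infinite length. -/
def IsInfJordanChain (A : H →ₗ.[ℂ] H) (l : ℂ) (x : ℕ → A.domain) : Prop :=
  (∀ n, (x n : H) ≠ 0) ∧ A (x 0) = l • ((x 0 : H)) ∧
  ∀ n, A (x (n + 1)) = l • ((x (n + 1) : H)) + (x n : H)

/-- The algebraic eigenspace `L_λ(A) = ⋃ₙ ker (A − λ)ⁿ`. -/
def algEig (A : H →ₗ.[ℂ] H) (l : ℂ) : Set H :=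
  {x | ∃ n : ℕ, ∃ c : ℕ → H, c 0 = 0 ∧ c n = x ∧
    ∀ i < n, ∃ h : c (i + 1) ∈ A.domain, A ⟨c (i + 1), h⟩ = l • c (i + 1) + c i}

/-- The bounded operator `B` commutes with `A`, i.e. `BA ⊆ AB`. -/
def CommutesWith (B : H →L[ℂ] H) (A : H →ₗ.[ℂ] H) : Prop :=
  ∀ x : A.domain, ∃ h : B (x : H) ∈ A.domain, A ⟨B (x : H), h⟩ = B (A x)

/-- `R` is the (everywhere defined, bounded) resolvent of `A` at `μ`. -/
def IsResolventOf (A : H →ₗ.[ℂ] H) (mu : ℂ) (R : H →L[ℂ] H) : Prop :=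
  (∀ y : H, ∃ h : R y ∈ A.domain, A ⟨R y, h⟩ - mu • R y = y) ∧
  (∀ x : A.domain, R (A x - mu • (x : H)) = (x : H))

/-- The system `𝓜(I)` of all finite unions of bounded intervals whose closure
is contained in `I`. -/
def MSet (I : Set ℝ) : Set (Set ℝ) :=
  {D | ∃ F : Finset (Set ℝ),
    (∀ J ∈ F, J.OrdConnected ∧ Bornology.IsBounded J ∧ closure J ⊆ I) ∧ D = ⋃₀ ↑F}

/-- The system `𝓜_S(I)`: elements of `𝓜(I)` whose boundary does not meet `S`. -/
def MSetS (I : Set ℝ) (S : Set ℝ) : Set (Set ℝ) :=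
  {D | D ∈ MSet I ∧ frontier D ∩ S = ∅}

/-- `l` belongs to the resolvent set of the restriction `A|L` of `A`
to the (`A`-invariant) subspace `L`. -/
def InResolventRestr (A : H →ₗ.[ℂ] H) (L : Submodule ℂ H) (l : ℂ) : Prop :=
  (∀ x : A.domain, (x : H) ∈ L → A x - l • (x : H) ∈ L) ∧
  (∀ y ∈ L, ∃ x : A.domain, (x : H) ∈ L ∧ A x - l • (x : H) = y) ∧
  ∃ c : ℝ, 0 < c ∧ ∀ x : A.domain, (x : H) ∈ L → c * ‖(x : H)‖ ≤ ‖A x - l • (x : H)‖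

/-- The spectrum of the restriction `A|L`. -/
def specRestr (A : H →ₗ.[ℂ] H) (L : Submodule ℂ H) : Set ℂ :=
  {l | ¬ InResolventRestr A L l}

/-- The closure of `S ∩ dom A` with respect to the graph norm of `A`. -/
def graphClosure (A : H →ₗ.[ℂ] H) (S : Set H) : Set H :=
  {x | ∃ hx : x ∈ A.domain, ((x, A ⟨x, hx⟩) : H × H) ∈
    closure {p : H × H | ∃ hy : p.1 ∈ A.domain, p.1 ∈ S ∧ A ⟨p.1, hy⟩ = p.2}}

/-- The sum `A + F` of `A` and a bounded operator `F`, with domain `dom A`. -/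
def addCLM (A : H →ₗ.[ℂ] H) (F : H →L[ℂ] H) : H →ₗ.[ℂ] H :=
  ⟨A.domain, A.toFun + (F.toLinearMap.comp A.domain.subtype)⟩

/-- The composition `G ∘ A` as a partially defined operator with domain `dom A`. -/
def compCLM (G : H →L[ℂ] H) (A : H →ₗ.[ℂ] H) : H →ₗ.[ℂ] H :=
  ⟨A.domain, G.toLinearMap.comp A.toFun⟩

/-- A map `f` defined on `dom A` is `A`-compact: any sequence bounded in the graph
norm of `A` has a subsequence whose image under `f` converges. -/
def IsACompact (A : H →ₗ.[ℂ] H) (f : A.domain → H) : Prop :=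
  ∀ x : ℕ → A.domain, (∃ C : ℝ, ∀ n, ‖(x n : H)‖ + ‖A (x n)‖ ≤ C) →
    ∃ φ : ℕ → ℕ, StrictMono φ ∧ ∃ y : H, Tendsto (fun n => f (x (φ n))) atTop (𝓝 y)

/-- `(L, [·,·])` is a Hilbert space: `[·,·]` is positive definite on `L` and `L` is
complete with respect to the induced norm. -/
def IsHilbertWrt (G : H →L[ℂ] H) (L : Submodule ℂ H) : Prop :=
  IsPosSet G (L : Set H) ∧
  ∀ u : ℕ → H, (∀ n, u n ∈ L) →
    (∀ ε : ℝ, 0 < ε → ∃ N, ∀ m ≥ N, ∀ n ≥ N, brkRe G (u m - u n) (u m - u n) < ε) →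
    ∃ v ∈ L, Tendsto (fun n => brkRe G (u n - v) (u n - v)) atTop (𝓝 0)

/-- `(L, −[·,·])` is a Hilbert space. -/
def IsAntiHilbertWrt (G : H →L[ℂ] H) (L : Submodule ℂ H) : Prop :=
  IsNegSet G (L : Set H) ∧
  ∀ u : ℕ → H, (∀ n, u n ∈ L) →
    (∀ ε : ℝ, 0 < ε → ∃ N, ∀ m ≥ N, ∀ n ≥ N, -brkRe G (u m - u n) (u m - u n) < ε) →
    ∃ v ∈ L, Tendsto (fun n => brkRe G (u n - v) (u n - v)) atTop (𝓝 0)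


/-- The sequence `x` converges weakly to `0` in `H`. -/
def WeakNullSeq (x : ℕ → H) : Prop :=
  ∀ y : H, Tendsto (fun n => (inner ℂ y (x n) : ℂ)) atTop (𝓝 0)

/-! ### Auxiliary results for Statement 1 -/

private theorem abs_re_le_norm (z : ℂ) : |z.re| ≤ ‖z‖ := by
  exact Complex.abs_re_le_norm z

/-- `|[u,u]| ≤ ‖G‖ ‖u‖²`. -/
private theorem abs_brkRe_le (G : H →L[ℂ] H) (u : H) : |brkRe G u u| ≤ ‖G‖ * ‖u‖ ^ 2 := by
  have h1 : |(brk G u u).re| ≤ ‖brk G u u‖ := abs_re_le_norm _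
  have h2 : ‖brk G u u‖ ≤ ‖G u‖ * ‖u‖ := norm_inner_le_norm _ _
  have h3 : ‖G u‖ ≤ ‖G‖ * ‖u‖ := G.le_opNorm u
  have h0 : (0:ℝ) ≤ ‖u‖ := norm_nonneg u
  calc |brkRe G u u| ≤ ‖G u‖ * ‖u‖ := le_trans h1 h2
    _ ≤ ‖G‖ * ‖u‖ * ‖u‖ := by nlinarith
    _ = ‖G‖ * ‖u‖ ^ 2 := by ring

/-- The domain of the (formal) adjoint of `A`, as a submodule. -/
private def adjDom (A : H →ₗ.[ℂ] H) : Submodule ℂ H where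
  carrier := {y : H | ∃ z : H, ∀ x : A.domain, (inner ℂ y (A x) : ℂ) = inner ℂ z (x : H)}
  zero_mem' := ⟨0, fun x => by simp⟩
  add_mem' := by
    rintro a b ⟨za, hza⟩ ⟨zb, hzb⟩
    exact ⟨za + zb, fun x => by simp [inner_add_left, hza x, hzb x]⟩
  smul_mem' := by
    rintro c y ⟨z, hz⟩
    exact ⟨c • z, fun x => by simp [inner_smul_left, hz x]⟩

/-- For a closed operator, the domain of the formal adjoint is dense. -/
private theorem adjDom_dense [CompleteSpace H] (A : H →ₗ.[ℂ] H) (hAc : A.IsClosed) :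
    Dense ((adjDom A : Submodule ℂ H) : Set H) := by
  have hbot : (adjDom A)ᗮ = ⊥ := by
    rw [Submodule.eq_bot_iff]
    intro u hu
    set e : WithLp 2 (H × H) ≃ₗ[ℂ] H × H := WithLp.linearEquiv 2 ℂ (H × H) with he
    set φ₀ : H × H →ₗ[ℂ] H × H :=
      LinearMap.prod (-(LinearMap.snd ℂ H H)) (LinearMap.fst ℂ H H) with hφ₀
    set φ : WithLp 2 (H × H) →ₗ[ℂ] H × H := φ₀ ∘ₗ e.toLinearMap with hφ
    set Γ : Submodule ℂ (WithLp 2 (H × H)) := A.graph.comap φ with hΓ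
    have hφc : Continuous φ := by
      have h1 : Continuous (e : WithLp 2 (H × H) → H × H) :=
        WithLp.prod_continuous_ofLp 2 H H
      have h2 : Continuous (φ₀ : H × H → H × H) :=
        continuous_snd.neg.prodMk continuous_fst
      exact h2.comp h1
    have hΓc : IsClosed (Γ : Set (WithLp 2 (H × H))) := hAc.preimage hφc
    haveI : CompleteSpace Γ := hΓc.completeSpace_coe
    have horth : Γᗮᗮ = Γ := Submodule.orthogonal_orthogonal Γ
    set p₀ : WithLp 2 (H × H) := e.symm (u, 0) with hp₀
    have hmem : p₀ ∈ Γᗮᗮ := by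
      rw [Submodule.mem_orthogonal]
      intro q hq
      rw [Submodule.mem_orthogonal] at hq
      set y : H := (e q).1 with hy
      set z : H := (e q).2 with hz
      have hyD : y ∈ adjDom A := by
        refine ⟨z, fun x => ?_⟩
        have hφpx : φ (e.symm (A x, -(x : H))) = ((x : H), A x) := by
          simp [hφ, hφ₀, LinearMap.prod_apply]
        have hpx : e.symm (A x, -(x : H)) ∈ Γ := by
          simp only [hΓ, Submodule.mem_comap, hφpx]
          exact A.mem_graph x
        have h0 := hq _ hpx
        rw [WithLp.prod_inner_apply] at h0
        have h0' : (inner ℂ (A x) y : ℂ) + inner ℂ (-(x : H)) z = 0 := h0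
        have h1 : (inner ℂ (A x) y : ℂ) = inner ℂ (x : H) z := by
          rw [inner_neg_left] at h0'
          linear_combination h0'
        calc (inner ℂ y (A x) : ℂ)
            = starRingEnd ℂ (inner ℂ (A x) y : ℂ) := (inner_conj_symm _ _).symm
          _ = starRingEnd ℂ (inner ℂ (x : H) z : ℂ) := by rw [h1]
          _ = inner ℂ z (x : H) := inner_conj_symm _ _
      have huy : (inner ℂ y u : ℂ) = 0 := (Submodule.mem_orthogonal _ u).mp hu y hyD
      rw [WithLp.prod_inner_apply]
      show (inner ℂ y u : ℂ) + inner ℂ z (0 : H) = 0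
      rw [huy, inner_zero_right, add_zero]
    rw [horth] at hmem
    have hφp₀ : φ p₀ = ((0 : H), u) := by
      simp [hφ, hφ₀, hp₀, LinearMap.prod_apply]
    have hg : ((0 : H), u) ∈ A.graph := by
      rw [hΓ, Submodule.mem_comap, hφp₀] at hmem
      exact hmem
    rw [LinearPMap.mem_graph_iff] at hg
    obtain ⟨x', hx'1, hx'2⟩ := hg
    have hx0 : x' = 0 := Subtype.coe_injective (by simpa using hx'1)
    rw [hx0] at hx'2
    simpa using hx'2.symm
  have htop := Submodule.topologicalClosure_eq_top_iff.mpr hbot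
  rw [dense_iff_closure_eq, ← Submodule.topologicalClosure_coe, htop]
  rfl

/-- For a closed operator, if `xₙ → 0` and `‖A xₙ‖ ≤ 1`, then `A xₙ ⇀ 0` weakly. -/
private theorem weak_null [CompleteSpace H] (A : H →ₗ.[ℂ] H) (hAc : A.IsClosed)
    (x : ℕ → A.domain) (hb : ∀ n, ‖A (x n)‖ ≤ 1)
    (hx : Tendsto (fun n => ((x n : H))) atTop (𝓝 0)) (u : H) :
    Tendsto (fun n => (inner ℂ u (A (x n)) : ℂ)) atTop (𝓝 0) := by
  rw [NormedAddCommGroup.tendsto_nhds_zero]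
  intro ε hε
  have hdense := adjDom_dense A hAc
  obtain ⟨y, hyD, hdy⟩ : ∃ y ∈ (adjDom A : Set H), dist u y < ε / 2 := by
    have := Metric.mem_closure_iff.mp (hdense u) (ε / 2) (by linarith)
    simpa using this
  obtain ⟨z, hz⟩ := hyD
  have hz0 : Tendsto (fun n => (inner ℂ z ((x n : H)) : ℂ)) atTop (𝓝 0) := by
    have hc : Continuous fun v : H => (inner ℂ z v : ℂ) := continuous_const.inner continuous_id
    have := (hc.tendsto 0).comp hx
    simpa [Function.comp_def] using this
  have hev : ∀ᶠ n in atTop, ‖(inner ℂ z ((x n : H)) : ℂ)‖ < ε / 2 :=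
    (NormedAddCommGroup.tendsto_nhds_zero.mp hz0) (ε / 2) (by linarith)
  filter_upwards [hev] with n hn
  have hsplit : (inner ℂ u (A (x n)) : ℂ)
      = inner ℂ (u - y) (A (x n)) + inner ℂ z ((x n : H)) := by
    rw [inner_sub_left, ← hz (x n)]; ring
  have h1 : ‖u - y‖ < ε / 2 := by rwa [← dist_eq_norm]
  calc ‖(inner ℂ u (A (x n)) : ℂ)‖
      ≤ ‖(inner ℂ (u - y) (A (x n)) : ℂ)‖ + ‖(inner ℂ z ((x n : H)) : ℂ)‖ := by
        rw [hsplit]; exact norm_add_le _ _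
    _ ≤ ‖u - y‖ * ‖A (x n)‖ + ‖(inner ℂ z ((x n : H)) : ℂ)‖ := by
        gcongr; exact norm_inner_le_norm _ _
    _ < ε := by
        have h2 : (0:ℝ) ≤ ‖u - y‖ := norm_nonneg _
        have h3 : ‖A (x n)‖ ≤ 1 := hb n
        nlinarith [norm_nonneg (A (x n)), norm_nonneg (inner ℂ z ((x n : H)) : ℂ)]

private theorem expand_inner {m : ℕ} (cc : Fin m → ℂ) (u v : Fin m → H) :
    (inner ℂ (∑ i, cc i • u i) (∑ j, cc j • v j) : ℂ)
      = ∑ i, ∑ j, (starRingEnd ℂ) (cc i) * cc j * inner ℂ (u i) (v j) := by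
  rw [sum_inner]
  refine Finset.sum_congr rfl fun i _ => ?_
  rw [inner_sum]
  refine Finset.sum_congr rfl fun j _ => ?_
  rw [inner_smul_left, inner_smul_right]; ring

private theorem offdiag_bound {m : ℕ} (cc : Fin m → ℂ) (B : Fin m → Fin m → ℂ) (δ : ℝ)
    (hδ : 0 ≤ δ) (hcc : ∀ i, ‖cc i‖ ≤ 1) (hB : ∀ i j, i ≠ j → ‖B i j‖ ≤ δ) :
    ‖(∑ i, ∑ j, (starRingEnd ℂ) (cc i) * cc j * B i j)
        - ∑ i, ((‖cc i‖ : ℂ)) ^ 2 * B i i‖ ≤ (m : ℝ) ^ 2 * δ := by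
  have key : ∀ i : Fin m, (∑ j, (starRingEnd ℂ) (cc i) * cc j * B i j)
      - ((‖cc i‖ : ℂ)) ^ 2 * B i i
      = ∑ j ∈ Finset.univ.erase i, (starRingEnd ℂ) (cc i) * cc j * B i j := by
    intro i
    rw [← Finset.add_sum_erase _ _ (Finset.mem_univ i)]
    have hdiag : (starRingEnd ℂ) (cc i) * cc i = ((‖cc i‖ : ℂ)) ^ 2 := by
      simpa using RCLike.conj_mul (cc i)
    rw [show (starRingEnd ℂ) (cc i) * cc i * B i i = ((‖cc i‖ : ℂ)) ^ 2 * B i i by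
      rw [← hdiag]]
    ring
  rw [← Finset.sum_sub_distrib]
  calc ‖∑ i, ((∑ j, (starRingEnd ℂ) (cc i) * cc j * B i j) - ((‖cc i‖ : ℂ)) ^ 2 * B i i)‖
      ≤ ∑ i, ‖(∑ j, (starRingEnd ℂ) (cc i) * cc j * B i j) - ((‖cc i‖ : ℂ)) ^ 2 * B i i‖ :=
        norm_sum_le _ _
    _ ≤ ∑ _i : Fin m, (m : ℝ) * δ := by
        refine Finset.sum_le_sum fun i _ => ?_
        rw [key i]
        calc ‖∑ j ∈ Finset.univ.erase i, (starRingEnd ℂ) (cc i) * cc j * B i j‖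
            ≤ ∑ j ∈ Finset.univ.erase i, ‖(starRingEnd ℂ) (cc i) * cc j * B i j‖ :=
              norm_sum_le _ _
          _ ≤ ∑ _j ∈ Finset.univ.erase i, δ := by
              refine Finset.sum_le_sum fun j hj => ?_
              have hne : i ≠ j := fun h => (Finset.mem_erase.mp hj).1 h.symm
              calc ‖(starRingEnd ℂ) (cc i) * cc j * B i j‖
                  = ‖cc i‖ * ‖cc j‖ * ‖B i j‖ := by
                    rw [norm_mul, norm_mul, RCLike.norm_conj]
                _ ≤ 1 * 1 * δ := by
                    refine mul_le_mul ?_ (hB i j hne) (norm_nonneg _) (by norm_num)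
                    exact mul_le_mul (hcc i) (hcc j) (norm_nonneg _) zero_le_one
                _ = δ := by ring
          _ = ((Finset.univ.erase i).card : ℝ) * δ := by
              rw [Finset.sum_const, nsmul_eq_mul]
          _ ≤ (m : ℝ) * δ := by
              have hcard : (Finset.univ.erase i).card ≤ m := by
                calc (Finset.univ.erase i).card
                    ≤ (Finset.univ : Finset (Fin m)).card :=
                      Finset.card_le_card (Finset.erase_subset _ _)
                  _ = m := by simp
              have hcard' : ((Finset.univ.erase i).card : ℝ) ≤ (m : ℝ) := by
                exact_mod_cast hcard
              nlinarith
    _ = (m : ℝ) * ((m : ℝ) * δ) := by rw [Finset.sum_const, nsmul_eq_mul]; simp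
    _ = (m : ℝ) ^ 2 * δ := by ring

set_option maxHeartbeats 1000000 in
/-- The core construction: from a null sequence with `‖A xₙ‖ = 1` along which
`[Axₙ, Axₙ]` is frequently small, one constructs a similar sequence inside `M`
(of finite codimension) along which `[AYₖ, AYₖ]` is eventually small. -/
private theorem main_blocks [CompleteSpace H] (G : H →L[ℂ] H) (hG : IsSelfAdjoint G)
    (A : H →ₗ.[ℂ] H) (hAc : A.IsClosed) (M : Submodule ℂ H) (hfin : FinCodim M)
    (x : ℕ → A.domain) (hx1 : ∀ n, ‖A (x n)‖ = 1)
    (hx2 : Tendsto (fun n => ((x n : H))) atTop (𝓝 0))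
    (hfreq : ∀ δ : ℝ, 0 < δ → ∃ᶠ n in atTop, brkRe G (A (x n)) (A (x n)) < δ) :
    ∃ Y : ℕ → A.domain, (∀ k, ((Y k : H)) ∈ M) ∧ IsInftyApproxSeq A Y ∧
      ∃ C : ℝ, 0 < C ∧ ∀ k : ℕ,
        brkRe G (A (Y k)) (A (Y k)) ≤ C * (1 / ((k : ℝ) + 1)) := by
  classical
  haveI : FiniteDimensional ℂ (H ⧸ M) := hfin
  set m : ℕ := Module.finrank ℂ (H ⧸ M) + 1 with hm
  have hGsym : ∀ a b : H, (inner ℂ (G a) b : ℂ) = inner ℂ a (G b) := fun a b => hG.isSymmetric a b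
  have hwn : ∀ u : H, Tendsto (fun n => (inner ℂ u (A (x n)) : ℂ)) atTop (𝓝 0) :=
    weak_null A hAc x (fun n => le_of_eq (hx1 n)) hx2
  have hstep : ∀ δ : ℝ, 0 < δ → ∀ U : Finset H, ∃ n : ℕ,
      brkRe G (A (x n)) (A (x n)) < δ ∧ ‖((x n : H))‖ ≤ δ ∧
      ∀ u ∈ U, ‖(inner ℂ u (A (x n)) : ℂ)‖ ≤ δ := by
    intro δ hδ U
    have h1 := hfreq δ hδ
    have h2 : ∀ᶠ n in atTop, ‖((x n : H))‖ ≤ δ := by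
      have hn := hx2.norm
      simp only [norm_zero] at hn
      exact hn.eventually_le_const hδ
    have h3 : ∀ᶠ n in atTop, ∀ u ∈ U, ‖(inner ℂ u (A (x n)) : ℂ)‖ ≤ δ := by
      rw [Filter.eventually_all_finset U]
      intro u _
      have hn := (hwn u).norm
      simp only [norm_zero] at hn
      exact hn.eventually_le_const hδ
    obtain ⟨n, hn⟩ := (h1.and_eventually (h2.and h3)).exists
    exact ⟨n, hn.1, hn.2.1, hn.2.2⟩
  have hchain : ∀ δ : ℝ, 0 < δ → ∀ i : ℕ, ∃ idx : ℕ → ℕ,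
      (∀ t, t < i → brkRe G (A (x (idx t))) (A (x (idx t))) < δ ∧ ‖((x (idx t) : H))‖ ≤ δ) ∧
      (∀ s t, s < t → t < i →
        ‖(inner ℂ (A (x (idx s))) (A (x (idx t))) : ℂ)‖ ≤ δ ∧
        ‖(inner ℂ (G (A (x (idx s)))) (A (x (idx t))) : ℂ)‖ ≤ δ) := by
    intro δ hδ i
    induction i with
    | zero =>
      exact ⟨id, fun t ht => absurd ht (Nat.not_lt_zero t),
        fun s t _ ht => absurd ht (Nat.not_lt_zero t)⟩
    | succ i ih =>
      obtain ⟨idx, hA1, hB1⟩ := ih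
      set U : Finset H := (Finset.range i).image (fun s => A (x (idx s))) ∪
        (Finset.range i).image (fun s => G (A (x (idx s)))) with hU
      obtain ⟨n, hn1, hn2, hn3⟩ := hstep δ hδ U
      refine ⟨fun t => if t < i then idx t else n, ?_, ?_⟩
      · intro t ht
        by_cases h : t < i
        · simp only [if_pos h]; exact hA1 t h
        · simp only [if_neg h]; exact ⟨hn1, hn2⟩
      · intro s t hst ht
        by_cases h : t < i
        · have hs : s < i := lt_trans hst h
          simp only [if_pos h, if_pos hs]
          exact hB1 s t hst h
        · have hs : s < i := by omega
          simp only [if_neg h, if_pos hs]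
          constructor
          · exact hn3 _ (Finset.mem_union_left _
              (Finset.mem_image.mpr ⟨s, Finset.mem_range.mpr hs, rfl⟩))
          · exact hn3 _ (Finset.mem_union_right _
              (Finset.mem_image.mpr ⟨s, Finset.mem_range.mpr hs, rfl⟩))
  have hblock : ∀ δ : ℝ, 0 < δ → (m : ℝ) ^ 2 * δ ≤ 1 / 4 → ∃ y : A.domain,
      ((y : H)) ∈ M ∧ ‖A y‖ = 1 ∧ ‖((y : H))‖ ≤ 2 * (m : ℝ) * δ ∧
      brkRe G (A y) (A y) ≤ 4 * (1 + (m : ℝ) ^ 2) * δ := by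
    intro δ hδ hδcap
    obtain ⟨idx, hAx, hBx⟩ := hchain δ hδ m
    set v : Fin m → H := fun i => A (x (idx (i : ℕ))) with hv
    have hv1 : ∀ i : Fin m, ‖v i‖ = 1 := fun i => hx1 _
    have hcross : ∀ i j : Fin m, i ≠ j →
        ‖(inner ℂ (v i) (v j) : ℂ)‖ ≤ δ ∧ ‖(inner ℂ (G (v i)) (v j) : ℂ)‖ ≤ δ := by
      intro i j hij
      have hijv : (i : ℕ) ≠ (j : ℕ) := fun h => hij (Fin.ext h)
      rcases lt_or_gt_of_ne hijv with h | h
      · exact hBx i j h j.isLt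
      · obtain ⟨h1, h2⟩ := hBx j i h i.isLt
        constructor
        · rw [norm_inner_symm]; exact h1
        · calc ‖(inner ℂ (G (v i)) (v j) : ℂ)‖
              = ‖(inner ℂ (v i) (G (v j)) : ℂ)‖ := by rw [hGsym]
            _ = ‖(inner ℂ (G (v j)) (v i) : ℂ)‖ := norm_inner_symm _ _
            _ ≤ δ := h2
    have hker : ∃ c : Fin m → ℂ, c ≠ 0 ∧
        ∑ i, c i • (Submodule.Quotient.mk ((x (idx (i : ℕ)) : H)) : H ⧸ M) = 0 := by
      set T : (Fin m → ℂ) →ₗ[ℂ] H ⧸ M :=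
        { toFun := fun c => ∑ i, c i • (Submodule.Quotient.mk ((x (idx (i : ℕ)) : H)) : H ⧸ M)
          map_add' := fun a b => by
            simp [add_smul, Finset.sum_add_distrib]
          map_smul' := fun r a => by
            simp [smul_smul, Finset.smul_sum] } with hT
      by_contra hc
      push_neg at hc
      have hinj : Function.Injective T := by
        rw [← LinearMap.ker_eq_bot, Submodule.eq_bot_iff]
        intro c hcT
        by_contra hc0
        exact hc c hc0 hcT
      have hle := LinearMap.finrank_le_finrank_of_injective hinj
      rw [Module.finrank_fin_fun] at hle
      omega
    obtain ⟨c, hc0, hcker⟩ := hker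
    set S : ℝ := ∑ i, ‖c i‖ ^ 2 with hS
    have hSpos : 0 < S := by
      obtain ⟨i0, hi0⟩ : ∃ i, c i ≠ 0 := by
        by_contra hc'; push_neg at hc'; exact hc0 (funext hc')
      have h1 : 0 < ‖c i0‖ ^ 2 := pow_pos (norm_pos_iff.mpr hi0) 2
      have h2 : ∀ i ∈ Finset.univ, (0:ℝ) ≤ ‖c i‖ ^ 2 := fun i _ => by positivity
      calc (0:ℝ) < ‖c i0‖ ^ 2 := h1
        _ ≤ S := Finset.single_le_sum h2 (Finset.mem_univ i0)
    have hsqS : 0 < Real.sqrt S := Real.sqrt_pos.mpr hSpos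
    set cc : Fin m → ℂ := fun i => ((Real.sqrt S : ℝ) : ℂ)⁻¹ * c i with hcc
    have hccsq : ∀ i, ‖cc i‖ ^ 2 = ‖c i‖ ^ 2 / S := by
      intro i
      rw [hcc]
      simp only [norm_mul, norm_inv, Complex.norm_real, Real.norm_eq_abs,
        abs_of_pos hsqS]
      rw [mul_pow, inv_pow, Real.sq_sqrt hSpos.le]
      ring
    have hccsum : ∑ i, ‖cc i‖ ^ 2 = 1 := by
      rw [Finset.sum_congr rfl fun i _ => hccsq i, ← Finset.sum_div, ← hS,
        div_self hSpos.ne']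
    have hccle : ∀ i, ‖cc i‖ ≤ 1 := by
      intro i
      have h2 : ‖cc i‖ ^ 2 ≤ ∑ j, ‖cc j‖ ^ 2 :=
        Finset.single_le_sum (f := fun j => ‖cc j‖ ^ 2) (fun j _ => by positivity)
          (Finset.mem_univ i)
      rw [hccsum] at h2
      nlinarith [norm_nonneg (cc i)]
    set y : A.domain := ∑ i, cc i • x (idx (i : ℕ)) with hy
    have hyc : ((y : H)) = ∑ i, cc i • ((x (idx (i : ℕ)) : H)) := by
      rw [hy, show ((∑ i, cc i • x (idx (i : ℕ)) : A.domain) : H)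
        = A.domain.subtype (∑ i, cc i • x (idx (i : ℕ))) from rfl, map_sum]
      exact Finset.sum_congr rfl fun i _ => by rw [_root_.map_smul]; rfl
    have hAy : A y = ∑ i, cc i • v i := by
      rw [hy, show A (∑ i, cc i • x (idx (i : ℕ)))
        = A.toFun (∑ i, cc i • x (idx (i : ℕ))) from rfl, map_sum]
      exact Finset.sum_congr rfl fun i _ => by rw [LinearMap.map_smul]; rfl
    have hyM : ((y : H)) ∈ M := by
      rw [← Submodule.Quotient.mk_eq_zero]
      have hmkq : (Submodule.Quotient.mk ((y : H)) : H ⧸ M)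
          = ∑ i, cc i • (Submodule.Quotient.mk ((x (idx (i : ℕ)) : H)) : H ⧸ M) := by
        rw [hyc, ← Submodule.mkQ_apply, map_sum]
        exact Finset.sum_congr rfl fun i _ => by rw [_root_.map_smul, Submodule.mkQ_apply]
      rw [hmkq]
      calc ∑ i, cc i • (Submodule.Quotient.mk ((x (idx (i : ℕ)) : H)) : H ⧸ M)
          = ((Real.sqrt S : ℝ) : ℂ)⁻¹ •
            ∑ i, c i • (Submodule.Quotient.mk ((x (idx (i : ℕ)) : H)) : H ⧸ M) := by
            rw [Finset.smul_sum]
            exact Finset.sum_congr rfl fun i _ => by rw [smul_smul]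
        _ = 0 := by rw [hcker, smul_zero]
    have hinner_ww : (inner ℂ (A y) (A y) : ℂ)
        = ∑ i, ∑ j, (starRingEnd ℂ) (cc i) * cc j * inner ℂ (v i) (v j) := by
      rw [hAy, expand_inner]
    have hdiag1 : ∑ i, ((‖cc i‖ : ℂ)) ^ 2 * (inner ℂ (v i) (v i) : ℂ) = 1 := by
      have hvi : ∀ i : Fin m, (inner ℂ (v i) (v i) : ℂ) = 1 := by
        intro i
        rw [inner_self_eq_norm_sq_to_K, hv1 i]
        norm_num
      rw [Finset.sum_congr rfl fun i _ => by rw [hvi i, mul_one]]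
      rw [show ∑ i, ((‖cc i‖ : ℂ)) ^ 2 = ((∑ i, ‖cc i‖ ^ 2 : ℝ) : ℂ) by push_cast; rfl]
      rw [hccsum]; norm_num
    have hoff1 := offdiag_bound cc (fun i j => (inner ℂ (v i) (v j) : ℂ)) δ hδ.le hccle
      (fun i j h => (hcross i j h).1)
    have hnAy : |‖A y‖ ^ 2 - 1| ≤ (m : ℝ) ^ 2 * δ := by
      have h1 : (inner ℂ (A y) (A y) : ℂ).re = ‖A y‖ ^ 2 := by
        simpa using inner_self_eq_norm_sq (𝕜 := ℂ) (A y)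
      have h2 : ((inner ℂ (A y) (A y) : ℂ)
          - ∑ i, ((‖cc i‖ : ℂ)) ^ 2 * (inner ℂ (v i) (v i) : ℂ)).re = ‖A y‖ ^ 2 - 1 := by
        rw [Complex.sub_re, h1, hdiag1, Complex.one_re]
      calc |‖A y‖ ^ 2 - 1|
          = |((inner ℂ (A y) (A y) : ℂ)
            - ∑ i, ((‖cc i‖ : ℂ)) ^ 2 * (inner ℂ (v i) (v i) : ℂ)).re| := by rw [h2]
        _ ≤ ‖(inner ℂ (A y) (A y) : ℂ)
            - ∑ i, ((‖cc i‖ : ℂ)) ^ 2 * (inner ℂ (v i) (v i) : ℂ)‖ := by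
            exact abs_re_le_norm _
        _ ≤ (m : ℝ) ^ 2 * δ := by rw [hinner_ww]; exact hoff1
    have hAylb : 1 / 2 ≤ ‖A y‖ := by
      have h3 : 1 - (m : ℝ) ^ 2 * δ ≤ ‖A y‖ ^ 2 := by
        have habs := abs_le.mp hnAy
        linarith [habs.1]
      nlinarith [norm_nonneg (A y)]
    have hGAy : G (A y) = ∑ i, cc i • G (v i) := by
      rw [hAy, map_sum]
      exact Finset.sum_congr rfl fun i _ => by rw [_root_.map_smul]
    have hinner_Gww : (inner ℂ (G (A y)) (A y) : ℂ)
        = ∑ i, ∑ j, (starRingEnd ℂ) (cc i) * cc j * inner ℂ (G (v i)) (v j) := by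
      rw [hGAy, hAy, expand_inner]
    have hdiag2 : (∑ i, ((‖cc i‖ : ℂ)) ^ 2 * (inner ℂ (G (v i)) (v i) : ℂ)).re ≤ δ := by
      have h1 : (∑ i, ((‖cc i‖ : ℂ)) ^ 2 * (inner ℂ (G (v i)) (v i) : ℂ)).re
          = ∑ i, ‖cc i‖ ^ 2 * (inner ℂ (G (v i)) (v i) : ℂ).re := by
        rw [Complex.re_sum]
        exact Finset.sum_congr rfl fun i _ => by
          rw [← Complex.ofReal_pow, Complex.re_ofReal_mul]
      rw [h1]
      calc ∑ i, ‖cc i‖ ^ 2 * (inner ℂ (G (v i)) (v i) : ℂ).re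
          ≤ ∑ i, ‖cc i‖ ^ 2 * δ := by
            refine Finset.sum_le_sum fun i _ => ?_
            have hf : (inner ℂ (G (v i)) (v i) : ℂ).re < δ := (hAx (i : ℕ) i.isLt).1
            have hnn : (0:ℝ) ≤ ‖cc i‖ ^ 2 := by positivity
            nlinarith
        _ = (∑ i, ‖cc i‖ ^ 2) * δ := by rw [Finset.sum_mul]
        _ = δ := by rw [hccsum, one_mul]
    have hoff2 := offdiag_bound cc (fun i j => (inner ℂ (G (v i)) (v j) : ℂ)) δ hδ.le hccle
      (fun i j h => (hcross i j h).2)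
    have hbrkAy : brkRe G (A y) (A y) ≤ δ + (m : ℝ) ^ 2 * δ := by
      have h1 : brkRe G (A y) (A y)
          = (∑ i, ((‖cc i‖ : ℂ)) ^ 2 * (inner ℂ (G (v i)) (v i) : ℂ)).re
            + ((inner ℂ (G (A y)) (A y) : ℂ)
              - ∑ i, ((‖cc i‖ : ℂ)) ^ 2 * (inner ℂ (G (v i)) (v i) : ℂ)).re := by
        show (inner ℂ (G (A y)) (A y) : ℂ).re = _
        rw [Complex.sub_re]; ring
      have h2 : ((inner ℂ (G (A y)) (A y) : ℂ)
          - ∑ i, ((‖cc i‖ : ℂ)) ^ 2 * (inner ℂ (G (v i)) (v i) : ℂ)).re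
          ≤ (m : ℝ) ^ 2 * δ := by
        calc ((inner ℂ (G (A y)) (A y) : ℂ)
              - ∑ i, ((‖cc i‖ : ℂ)) ^ 2 * (inner ℂ (G (v i)) (v i) : ℂ)).re
            ≤ |((inner ℂ (G (A y)) (A y) : ℂ)
              - ∑ i, ((‖cc i‖ : ℂ)) ^ 2 * (inner ℂ (G (v i)) (v i) : ℂ)).re| := le_abs_self _
          _ ≤ ‖(inner ℂ (G (A y)) (A y) : ℂ)
              - ∑ i, ((‖cc i‖ : ℂ)) ^ 2 * (inner ℂ (G (v i)) (v i) : ℂ)‖ := by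
              exact abs_re_le_norm _
          _ ≤ (m : ℝ) ^ 2 * δ := by rw [hinner_Gww]; exact hoff2
      rw [h1]
      linarith [hdiag2]
    have hAypos : (0:ℝ) < ‖A y‖ := lt_of_lt_of_le (by norm_num) hAylb
    have hAy0 : ‖A y‖ ≠ 0 := hAypos.ne'
    set t : ℝ := ‖A y‖⁻¹ with ht
    have htpos : 0 < t := by rw [ht]; exact inv_pos.mpr hAypos
    have htle : t ≤ 2 := by
      have h2 := one_div_le_one_div_of_le (by norm_num : (0:ℝ) < 1/2) hAylb
      rw [ht, ← one_div]
      norm_num at h2 ⊢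
      linarith
    set yh : A.domain := ((t : ℝ) : ℂ) • y with hyh
    have hAyh : A yh = ((t : ℝ) : ℂ) • A y := by
      rw [hyh]; exact A.map_smul _ _
    have hyhM : ((yh : H)) ∈ M := by
      rw [hyh, show (((((t : ℝ) : ℂ)) • y : A.domain) : H)
        = (((t : ℝ) : ℂ)) • ((y : H)) from rfl]
      exact M.smul_mem _ hyM
    have hyhnorm1 : ‖A yh‖ = 1 := by
      rw [hAyh, norm_smul, Complex.norm_real, Real.norm_eq_abs, abs_of_pos htpos, ht]
      rw [inv_mul_cancel₀ hAy0]
    have hyhsmall : ‖((yh : H))‖ ≤ 2 * (m : ℝ) * δ := by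
      have h1 : ‖((yh : H))‖ = t * ‖((y : H))‖ := by
        rw [hyh, show (((((t : ℝ) : ℂ)) • y : A.domain) : H)
          = (((t : ℝ) : ℂ)) • ((y : H)) from rfl, norm_smul, Complex.norm_real,
          Real.norm_eq_abs, abs_of_pos htpos]
      have h2 : ‖((y : H))‖ ≤ (m : ℝ) * δ := by
        rw [hyc]
        calc ‖∑ i, cc i • ((x (idx (i : ℕ)) : H))‖
            ≤ ∑ i, ‖cc i • ((x (idx (i : ℕ)) : H))‖ := norm_sum_le _ _
          _ ≤ ∑ _i : Fin m, δ := by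
              refine Finset.sum_le_sum fun i _ => ?_
              rw [norm_smul]
              have ha := (hAx (i : ℕ) i.isLt).2
              have hb := hccle i
              nlinarith [norm_nonneg (cc i), norm_nonneg ((x (idx (i : ℕ)) : H))]
          _ = (m : ℝ) * δ := by rw [Finset.sum_const, nsmul_eq_mul]; simp
      rw [h1]
      nlinarith [norm_nonneg ((y : H))]
    have hyhbrk : brkRe G (A yh) (A yh) ≤ 4 * (1 + (m : ℝ) ^ 2) * δ := by
      have h1 : brkRe G (A yh) (A yh) = t ^ 2 * brkRe G (A y) (A y) := by
        show (brk G (A yh) (A yh)).re = _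
        rw [show brk G (A yh) (A yh) = inner ℂ (G (A yh)) (A yh) from rfl]
        rw [hAyh, _root_.map_smul, inner_smul_left, inner_smul_right, Complex.conj_ofReal]
        rw [show (((t : ℝ) : ℂ)) * ((((t : ℝ) : ℂ)) * (inner ℂ (G (A y)) (A y) : ℂ))
          = ((t ^ 2 : ℝ) : ℂ) * (inner ℂ (G (A y)) (A y) : ℂ) by push_cast; ring]
        rw [Complex.re_ofReal_mul]
        rfl
      rw [h1]
      rcases le_or_gt 0 (brkRe G (A y) (A y)) with h | h
      · have ht4 : t ^ 2 ≤ 4 := by nlinarith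
        nlinarith [hbrkAy]
      · have hneg : t ^ 2 * brkRe G (A y) (A y) ≤ 0 := by nlinarith
        have h4 : (0:ℝ) ≤ 4 * (1 + (m : ℝ) ^ 2) * δ := by positivity
        linarith
    exact ⟨yh, hyhM, hyhnorm1, hyhsmall, hyhbrk⟩
  have hY : ∀ k : ℕ, ∃ y : A.domain, ((y : H)) ∈ M ∧ ‖A y‖ = 1 ∧
      ‖((y : H))‖ ≤ 2 * (m : ℝ) * (1 / ((k : ℝ) + 1)) ∧
      brkRe G (A y) (A y) ≤ 4 * (1 + (m : ℝ) ^ 2) * (1 / ((k : ℝ) + 1)) := by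
    intro k
    have hδpos : 0 < min (1 / ((k : ℝ) + 1)) (1 / (4 * (m : ℝ) ^ 2 + 1)) := by
      refine lt_min (by positivity) (by positivity)
    have hδcap : (m : ℝ) ^ 2 * min (1 / ((k : ℝ) + 1)) (1 / (4 * (m : ℝ) ^ 2 + 1)) ≤ 1 / 4 := by
      have h1 : min (1 / ((k : ℝ) + 1)) (1 / (4 * (m : ℝ) ^ 2 + 1))
          ≤ 1 / (4 * (m : ℝ) ^ 2 + 1) := min_le_right _ _
      have h2 : (0:ℝ) < 4 * (m : ℝ) ^ 2 + 1 := by positivity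
      have h3 : (m : ℝ) ^ 2 * (1 / (4 * (m : ℝ) ^ 2 + 1)) ≤ 1 / 4 := by
        rw [mul_one_div, div_le_div_iff₀ h2 (by norm_num)]
        nlinarith [sq_nonneg (m : ℝ)]
      nlinarith [sq_nonneg (m : ℝ)]
    obtain ⟨y, h1, h2, h3, h4⟩ := hblock _ hδpos hδcap
    have hminle : min (1 / ((k : ℝ) + 1)) (1 / (4 * (m : ℝ) ^ 2 + 1)) ≤ 1 / ((k : ℝ) + 1) :=
      min_le_left _ _
    refine ⟨y, h1, h2, ?_, ?_⟩
    · have hc : (0:ℝ) ≤ 2 * (m : ℝ) := by positivity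
      nlinarith
    · have hc : (0:ℝ) ≤ 4 * (1 + (m : ℝ) ^ 2) := by positivity
      nlinarith
  choose Y hY1 hY2 hY3 hY4 using hY
  refine ⟨Y, hY1, ⟨hY2, ?_⟩, ⟨4 * (1 + (m : ℝ) ^ 2), by positivity, hY4⟩⟩
  apply squeeze_zero_norm hY3
  have h0 : Tendsto (fun k : ℕ => 1 / ((k : ℝ) + 1)) atTop (𝓝 0) :=
    tendsto_one_div_add_atTop_nhds_zero_nat
  have := h0.const_mul (2 * (m : ℝ))
  simpa using this

private theorem piPlus_top [CompleteSpace H] (G : H →L[ℂ] H) (hG : IsSelfAdjoint G)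
    (A : H →ₗ.[ℂ] H) (hAc : A.IsClosed) (M : Submodule ℂ H) (hfin : FinCodim M)
    (hM : InftyPiPlusCond G A M) : InftyPiPlusCond G A ⊤ := by
  intro x _ hxs
  obtain ⟨hx1, hx2⟩ := hxs
  by_contra hcon
  rw [not_lt] at hcon
  have hbound : ∀ n, |brkRe G (A (x n)) (A (x n))| ≤ ‖G‖ := by
    intro n
    have := abs_brkRe_le G (A (x n))
    rw [hx1 n] at this
    simpa using this
  have hfreq : ∀ δ : ℝ, 0 < δ → ∃ᶠ n in atTop, brkRe G (A (x n)) (A (x n)) < δ := by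
    intro δ hδ
    by_contra hfr
    rw [not_frequently] at hfr
    have hev : ∀ᶠ n in atTop, δ ≤ brkRe G (A (x n)) (A (x n)) := by
      filter_upwards [hfr] with n hn
      linarith [not_lt.mp hn]
    have hcob : IsCoboundedUnder (· ≥ ·) atTop (fun n => brkRe G (A (x n)) (A (x n))) := by
      apply Filter.IsBoundedUnder.isCoboundedUnder_ge
      exact isBoundedUnder_of ⟨‖G‖, fun n => (abs_le.mp (hbound n)).2⟩
    have := le_liminf_of_le hcob hev
    linarith
  obtain ⟨Y, hY1, hY2, C, hCpos, hY3⟩ := main_blocks G hG A hAc M hfin x hx1 hx2 hfreq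
  have hpos := hM Y hY1 hY2
  have hboundY : ∀ k, |brkRe G (A (Y k)) (A (Y k))| ≤ ‖G‖ := by
    intro k
    have := abs_brkRe_le G (A (Y k))
    rw [hY2.1 k] at this
    simpa using this
  have hgb : IsBoundedUnder (· ≥ ·) atTop (fun k => brkRe G (A (Y k)) (A (Y k))) :=
    isBoundedUnder_of ⟨-‖G‖, fun k => (abs_le.mp (hboundY k)).1⟩
  have hb2 : (atTop.liminf fun n => brkRe G (A (Y n)) (A (Y n))) / 2
      < atTop.liminf fun n => brkRe G (A (Y n)) (A (Y n)) := by linarith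
  have hev1 : ∀ᶠ k in atTop,
      (atTop.liminf fun n => brkRe G (A (Y n)) (A (Y n))) / 2
        < brkRe G (A (Y k)) (A (Y k)) :=
    eventually_lt_of_lt_liminf hb2 hgb
  have htend : Tendsto (fun k : ℕ => C * (1 / ((k : ℝ) + 1))) atTop (𝓝 0) := by
    simpa using tendsto_one_div_add_atTop_nhds_zero_nat.const_mul C
  have hhalf : (0:ℝ) < (atTop.liminf fun n => brkRe G (A (Y n)) (A (Y n))) / 2 := by
    linarith
  have hev2 : ∀ᶠ k : ℕ in atTop, C * (1 / ((k : ℝ) + 1))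
      < (atTop.liminf fun n => brkRe G (A (Y n)) (A (Y n))) / 2 :=
    htend.eventually_lt_const hhalf
  obtain ⟨k, h1, h2⟩ := (hev1.and hev2).exists
  linarith [hY3 k]

private theorem piMinus_top [CompleteSpace H] (G : H →L[ℂ] H) (hG : IsSelfAdjoint G)
    (A : H →ₗ.[ℂ] H) (hAc : A.IsClosed) (M : Submodule ℂ H) (hfin : FinCodim M)
    (hM : InftyPiMinusCond G A M) : InftyPiMinusCond G A ⊤ := by
  intro x _ hxs
  obtain ⟨hx1, hx2⟩ := hxs
  by_contra hcon
  rw [not_lt] at hcon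
  have hneg : ∀ u w : H, brkRe (-G) u w = -brkRe G u w := by
    intro u w
    simp [brkRe, brk, inner_neg_left]
  have hbound : ∀ n, |brkRe G (A (x n)) (A (x n))| ≤ ‖G‖ := by
    intro n
    have := abs_brkRe_le G (A (x n))
    rw [hx1 n] at this
    simpa using this
  have hfreq : ∀ δ : ℝ, 0 < δ → ∃ᶠ n in atTop, brkRe (-G) (A (x n)) (A (x n)) < δ := by
    intro δ hδ
    by_contra hfr
    rw [not_frequently] at hfr
    have hev : ∀ᶠ n in atTop, brkRe G (A (x n)) (A (x n)) ≤ -δ := by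
      filter_upwards [hfr] with n hn
      have hle := not_lt.mp hn
      rw [hneg] at hle
      linarith
    have hcob : IsCoboundedUnder (· ≤ ·) atTop (fun n => brkRe G (A (x n)) (A (x n))) := by
      apply Filter.IsBoundedUnder.isCoboundedUnder_le
      exact isBoundedUnder_of ⟨-‖G‖, fun n => (abs_le.mp (hbound n)).1⟩
    have := limsup_le_of_le hcob hev
    linarith
  obtain ⟨Y, hY1, hY2, C, hCpos, hY3⟩ := main_blocks (-G) hG.neg A hAc M hfin x hx1 hx2 hfreq
  have hnegL := hM Y hY1 hY2
  have hboundY : ∀ k, |brkRe G (A (Y k)) (A (Y k))| ≤ ‖G‖ := by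
    intro k
    have := abs_brkRe_le G (A (Y k))
    rw [hY2.1 k] at this
    simpa using this
  have hgb : IsBoundedUnder (· ≤ ·) atTop (fun k => brkRe G (A (Y k)) (A (Y k))) :=
    isBoundedUnder_of ⟨‖G‖, fun k => (abs_le.mp (hboundY k)).2⟩
  have hb2 : atTop.limsup (fun n => brkRe G (A (Y n)) (A (Y n)))
      < (atTop.limsup fun n => brkRe G (A (Y n)) (A (Y n))) / 2 := by linarith
  have hev1 : ∀ᶠ k in atTop, brkRe G (A (Y k)) (A (Y k))
      < (atTop.limsup fun n => brkRe G (A (Y n)) (A (Y n))) / 2 :=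
    eventually_lt_of_limsup_lt hb2 hgb
  have hY3' : ∀ k : ℕ, -(C * (1 / ((k : ℝ) + 1))) ≤ brkRe G (A (Y k)) (A (Y k)) := by
    intro k
    have := hY3 k
    rw [hneg] at this
    linarith
  have htend : Tendsto (fun k : ℕ => -(C * (1 / ((k : ℝ) + 1)))) atTop (𝓝 0) := by
    have := (tendsto_one_div_add_atTop_nhds_zero_nat.const_mul C).neg
    simpa using this
  have hhalf : (atTop.limsup fun n => brkRe G (A (Y n)) (A (Y n))) / 2 < 0 := by
    linarith
  have hev2 : ∀ᶠ k : ℕ in atTop,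
      (atTop.limsup fun n => brkRe G (A (Y n)) (A (Y n))) / 2
        < -(C * (1 / ((k : ℝ) + 1))) :=
    htend.eventually_const_lt hhalf
  obtain ⟨k, h1, h2⟩ := (hev1.and hev2).exists
  linarith [hY3' k]


/-- If `∞` is a spectral point of type `π₊` (`π₋`) of `A`, then `∞`
is a spectral point of positive (negative) type of `A`. -/
theorem statement_1 [CompleteSpace H] (G : H →L[ℂ] H) (hG : IsSelfAdjoint G)
    (A : H →ₗ.[ℂ] H) (hAc : A.IsClosed) (hAd : Dense (A.domain : Set H)) :
    (sigmaPiPlusInfty G A → sigmaPPInfty G A) ∧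
    (sigmaPiMinusInfty G A → sigmaMMInfty G A) := by
  constructor
  · rintro ⟨hub, M, hfin, hcond⟩
    exact ⟨hub, piPlus_top G hG A hAc M hfin hcond⟩
  · rintro ⟨hub, M, hfin, hcond⟩
    exact ⟨hub, piMinus_top G hG A hAc M hfin hcond⟩

end Paper
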